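/- For every α ∈ (0,1) and s > 0, Γ(1 + s/α)/Γ(1+s) = exp( γ(1 - 1/α) s + ∫_{-∞}^0 (e^{sx} - 1 - sx) · e^{-α|x|}(1 - e^{-(1-α)|x|}) / (|x|(1 - e^{-|x|})(1 - e^{-α|x|})) dx ), where γ is Euler's constant. -/

import Mathlib

/-!
Write `K_c(u) = e^{-cu} / (u (1 - e^{-cu}))`. After `x = -u`, the kernel of the statement is
`K_α - K_1`, so it suffices to show `∫₀^∞ (e^{-tu} - 1 + tu) K_c(u) du = log Γ(1 + t/c) + γ t/c`.
Expanding `u K_c(u) = ∑_{n ≥ 1} e^{-ncu}` and integrating term by term (all terms are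
nonnegative) reduces this to the Frullani-type integrals
`∫₀^∞ (e^{-tu} - 1 + tu) e^{-au} / u du = t/a - log (1 + t/a)`, which follow from
`(e^{-tu} - 1 + tu) / u = ∫₀^t (1 - e^{-ru}) dr` and Fubini. Summing over `a = nc` gives the
Weierstrass series `log Γ(1 + z) + γ z = ∑_{n ≥ 1} (z/n - log (1 + z/n))` at `z = t/c`.
-/

open Real Set MeasureTheory Filter

lemma sum_range_div_sub_log_one_add_div {t : ℝ} (ht : 0 < t) (N : ℕ) :
    ∑ n ∈ Finset.range N, (t / (n + 1) - log (1 + t / (n + 1))) =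
      t * (harmonic N - log N) + (BohrMollerup.logGammaSeq t N + log t) := by
  induction N with
  | zero => simp [BohrMollerup.logGammaSeq]
  | succ N ih =>
    have hN : (0 : ℝ) < N + 1 := by positivity
    have hlog : log (1 + t / (N + 1)) = log (t + N + 1) - log (N + 1) := by
      rw [← log_div (by positivity) hN.ne']
      congr 1
      field_simp
      ring
    rw [Finset.sum_range_succ, ih, hlog, harmonic_succ]
    simp only [BohrMollerup.logGammaSeq, Finset.sum_range_succ (n := N + 1), Nat.factorial_succ]
    push_cast
    rw [log_mul hN.ne' (by positivity)]
    ring_nf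

lemma hasSum_div_sub_log_one_add_div {t : ℝ} (ht : 0 < t) :
    HasSum (fun n : ℕ => t / (n + 1) - log (1 + t / (n + 1)))
      (log (Gamma (1 + t)) + eulerMascheroniConstant * t) := by
  have hnonneg (n : ℕ) : 0 ≤ t / (n + 1) - log (1 + t / (n + 1)) := by
    linarith [log_le_sub_one_of_pos (by positivity : 0 < 1 + t / (n + 1))]
  rw [hasSum_iff_tendsto_nat_of_nonneg hnonneg]
  simp_rw [sum_range_div_sub_log_one_add_div ht]
  have hlim := (tendsto_harmonic_sub_log.const_mul t).add
    ((BohrMollerup.tendsto_log_gamma ht).add_const (log t))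
  convert hlim using 2
  rw [add_comm 1 t, Gamma_add_one ht.ne', log_mul ht.ne' (Gamma_pos_of_pos ht).ne']
  ring

lemma integrable_and_integral_eq_of_hasSum_of_nonneg {ι α : Type*} [Countable ι]
    [MeasurableSpace α] {μ : Measure α} {f : ι → α → ℝ} {F : α → ℝ} {I : ℝ}
    (hf : ∀ n, Integrable (f n) μ) (hf_nonneg : ∀ n, 0 ≤ᵐ[μ] f n)
    (hF : ∀ᵐ x ∂μ, HasSum (fun n => f n x) (F x))
    (hI : HasSum (fun n => ∫ x, f n x ∂μ) I) :
    Integrable F μ ∧ ∫ x, F x ∂μ = I := by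
  have hf_nonneg' : ∀ᵐ x ∂μ, ∀ n, 0 ≤ f n x := ae_all_iff.2 hf_nonneg
  have hF_nonneg : 0 ≤ᵐ[μ] F := by
    filter_upwards [hF, hf_nonneg'] with x hx hx0 using hx.nonneg hx0
  have hF_meas : AEStronglyMeasurable F μ :=
    aestronglyMeasurable_of_tendsto_ae atTop
      (fun s => Finset.aestronglyMeasurable_fun_sum s fun n _ => (hf n).1) hF
  have hlint : ∫⁻ x, ENNReal.ofReal (F x) ∂μ = ENNReal.ofReal I := calc
    ∫⁻ x, ENNReal.ofReal (F x) ∂μ = ∫⁻ x, ∑' n, ENNReal.ofReal (f n x) ∂μ := by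
      refine lintegral_congr_ae ?_
      filter_upwards [hF, hf_nonneg'] with x hx hx0
      rw [← hx.tsum_eq, ENNReal.ofReal_tsum_of_nonneg hx0 hx.summable]
    _ = ∑' n, ENNReal.ofReal (∫ x, f n x ∂μ) := by
      rw [lintegral_tsum fun n => (hf n).1.aemeasurable.ennreal_ofReal]
      congr 1 with n
      rw [ofReal_integral_eq_lintegral_ofReal (hf n) (hf_nonneg n)]
    _ = ENNReal.ofReal I := by
      rw [← ENNReal.ofReal_tsum_of_nonneg (fun n => integral_nonneg_of_ae (hf_nonneg n))
        hI.summable, hI.tsum_eq]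
  have hF_int : Integrable F μ :=
    ⟨hF_meas, (hasFiniteIntegral_iff_ofReal hF_nonneg).2 (hlint ▸ ENNReal.ofReal_lt_top)⟩
  refine ⟨hF_int, ?_⟩
  rw [integral_eq_lintegral_of_nonneg_ae hF_nonneg hF_meas, hlint,
    ENNReal.toReal_ofReal (hI.nonneg fun n => integral_nonneg_of_ae (hf_nonneg n))]

lemma integral_exp_neg_sub_exp_neg_add_mul (c t : ℝ) {u : ℝ} (hu : u ≠ 0) :
    ∫ r in (0)..t, (exp (-(c * u)) - exp (-((c + r) * u))) =
      (exp (-(t * u)) - 1 + t * u) * exp (-(c * u)) / u := by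
  have hderiv (r : ℝ) : HasDerivAt (fun r => r * exp (-(c * u)) + exp (-((c + r) * u)) / u)
      (exp (-(c * u)) - exp (-((c + r) * u))) r := by
    refine (((hasDerivAt_id' r).mul_const (exp (-(c * u)))).add
      ((((hasDerivAt_id' r).const_add c).mul_const u).neg.exp.div_const u)).congr_deriv ?_
    simp only [Pi.neg_apply, one_mul, mul_neg, neg_div, mul_div_assoc, div_self hu, mul_one,
      sub_eq_add_neg]
  rw [intervalIntegral.integral_eq_sub_of_hasDerivAt (fun r _ => hderiv r)
    (by apply Continuous.intervalIntegrable; fun_prop)]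
  have hexp : exp (-((c + t) * u)) = exp (-(t * u)) * exp (-(c * u)) := by
    rw [← exp_add]; ring_nf
  rw [hexp]
  field_simp
  ring_nf

lemma integral_Ioi_exp_neg_sub_exp_neg {c r : ℝ} (hc : 0 < c) (hr : 0 ≤ r) :
    ∫ u in Ioi 0, (exp (-(c * u)) - exp (-((c + r) * u))) = c⁻¹ - (c + r)⁻¹ := by
  have hint {a : ℝ} (ha : 0 < a) : IntegrableOn (fun u => exp (-(a * u))) (Ioi 0) := by
    simpa only [neg_mul] using exp_neg_integrableOn_Ioi 0 ha
  have hval {a : ℝ} (ha : 0 < a) : ∫ u in Ioi 0, exp (-(a * u)) = a⁻¹ := by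
    simp_rw [← neg_mul]
    rw [integral_exp_mul_Ioi (neg_neg_of_pos ha)]
    simp
  rw [integral_sub (hint hc) (hint (by positivity)), hval hc, hval (by positivity)]

lemma integral_inv_sub_inv_add {c t : ℝ} (hc : 0 < c) (ht : 0 ≤ t) :
    ∫ r in (0)..t, (c⁻¹ - (c + r)⁻¹) = t / c - log (1 + t / c) := by
  have hderiv : ∀ r ∈ uIcc 0 t,
      HasDerivAt (fun r => r / c - log (c + r)) (c⁻¹ - (c + r)⁻¹) r := by
    intro r hr
    rw [uIcc_of_le ht] at hr
    have hcr : c + r ≠ 0 := by linarith [hr.1]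
    refine (((hasDerivAt_id' r).div_const c).sub
      (((hasDerivAt_id' r).const_add c).log hcr)).congr_deriv ?_
    simp only [inv_eq_one_div]
  rw [intervalIntegral.integral_eq_sub_of_hasDerivAt hderiv]
  · rw [show 1 + t / c = (c + t) / c by field_simp, log_div (by positivity) hc.ne',
      zero_div, add_zero]
    ring
  · refine (continuousOn_const.sub ((continuousOn_id.const_add c).inv₀ ?_)).intervalIntegrable
    intro r hr
    rw [uIcc_of_le ht] at hr
    exact (add_pos_of_pos_of_nonneg hc hr.1).ne'

lemma integrable_exp_neg_sub_exp_neg_add {c : ℝ} (hc : 0 < c) (t : ℝ) :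
    Integrable (fun p : ℝ × ℝ => exp (-(c * p.1)) - exp (-((c + p.2) * p.1)))
      ((volume.restrict (Ioi 0)).prod (volume.restrict (Ioc 0 t))) := by
  have hdom : Integrable (fun p : ℝ × ℝ => exp (-c * p.1) * 1)
      ((volume.restrict (Ioi 0)).prod (volume.restrict (Ioc 0 t))) :=
    (exp_neg_integrableOn_Ioi 0 hc).mul_prod (integrable_const 1)
  refine hdom.mono (by fun_prop) ?_
  rw [Measure.prod_restrict, ae_restrict_iff' (measurableSet_Ioi.prod measurableSet_Ioc)]
  filter_upwards with p hp
  obtain ⟨hu, hr, -⟩ := hp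
  have hle : exp (-((c + p.2) * p.1)) ≤ exp (-(c * p.1)) := exp_le_exp.2 (by nlinarith [hu.out])
  rw [norm_of_nonneg (by linarith), norm_of_nonneg (by positivity), neg_mul, mul_one]
  linarith [exp_pos (-((c + p.2) * p.1))]

lemma integrableOn_exp_neg_sub_one_add_mul_mul_exp_neg_div {c t : ℝ} (hc : 0 < c) (ht : 0 ≤ t) :
    IntegrableOn (fun u => (exp (-(t * u)) - 1 + t * u) * exp (-(c * u)) / u) (Ioi 0) := by
  refine (integrable_exp_neg_sub_exp_neg_add hc t).integral_prod_left.congr ?_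
  filter_upwards [ae_restrict_mem measurableSet_Ioi] with u hu
  rw [← intervalIntegral.integral_of_le ht, integral_exp_neg_sub_exp_neg_add_mul c t (ne_of_gt hu)]

lemma integral_exp_neg_sub_one_add_mul_mul_exp_neg_div {c t : ℝ} (hc : 0 < c) (ht : 0 ≤ t) :
    ∫ u in Ioi 0, (exp (-(t * u)) - 1 + t * u) * exp (-(c * u)) / u = t / c - log (1 + t / c) :=
  calc ∫ u in Ioi 0, (exp (-(t * u)) - 1 + t * u) * exp (-(c * u)) / u
      = ∫ u in Ioi 0, ∫ r in Ioc 0 t, (exp (-(c * u)) - exp (-((c + r) * u))) := by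
        refine setIntegral_congr_fun measurableSet_Ioi fun u hu => ?_
        rw [← intervalIntegral.integral_of_le ht,
          integral_exp_neg_sub_exp_neg_add_mul c t (ne_of_gt hu)]
    _ = ∫ r in Ioc 0 t, ∫ u in Ioi 0, (exp (-(c * u)) - exp (-((c + r) * u))) :=
        integral_integral_swap (integrable_exp_neg_sub_exp_neg_add hc t)
    _ = ∫ r in Ioc 0 t, (c⁻¹ - (c + r)⁻¹) :=
        setIntegral_congr_fun measurableSet_Ioc fun r hr =>
          integral_Ioi_exp_neg_sub_exp_neg hc hr.1.le
    _ = t / c - log (1 + t / c) := by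
        rw [← intervalIntegral.integral_of_le ht, integral_inv_sub_inv_add hc ht]

noncomputable def malmstenKernel (c u : ℝ) : ℝ := exp (-(c * u)) / (u * (1 - exp (-(c * u))))

lemma hasSum_malmstenKernel {c u : ℝ} (hc : 0 < c) (hu : 0 < u) :
    HasSum (fun n : ℕ => exp (-((n + 1) * c * u)) / u) (malmstenKernel c u) := by
  have hlt : exp (-(c * u)) < 1 := exp_lt_one_iff.2 (neg_neg_of_pos (mul_pos hc hu))
  have h := ((hasSum_geometric_of_lt_one (exp_pos _).le hlt).mul_left
    (exp (-(c * u)))).div_const u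
  rw [← div_eq_mul_inv, div_div, mul_comm (1 - _) u] at h
  refine h.congr_fun fun n => ?_
  rw [← exp_nat_mul, ← exp_add]
  ring_nf

lemma integrableOn_and_integral_mul_malmstenKernel {c t : ℝ} (hc : 0 < c) (ht : 0 < t) :
    IntegrableOn (fun u => (exp (-(t * u)) - 1 + t * u) * malmstenKernel c u) (Ioi 0) ∧
      ∫ u in Ioi 0, (exp (-(t * u)) - 1 + t * u) * malmstenKernel c u
        = log (Gamma (1 + t / c)) + eulerMascheroniConstant * (t / c) := by
  have hpos (u : ℝ) : 0 ≤ exp (-(t * u)) - 1 + t * u := by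
    linarith [add_one_le_exp (-(t * u))]
  refine integrable_and_integral_eq_of_hasSum_of_nonneg
    (f := fun (n : ℕ) u => (exp (-(t * u)) - 1 + t * u) * exp (-((n + 1) * c * u)) / u)
    (fun n => integrableOn_exp_neg_sub_one_add_mul_mul_exp_neg_div (by positivity) ht.le)
    (fun n => ?_) ?_ ?_
  · filter_upwards [ae_restrict_mem measurableSet_Ioi] with u (hu : 0 < u)
    have := hpos u
    positivity
  · filter_upwards [ae_restrict_mem measurableSet_Ioi] with u (hu : 0 < u)
    exact ((hasSum_malmstenKernel hc hu).mul_left _).congr_fun fun n => mul_div_assoc _ _ _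
  · convert hasSum_div_sub_log_one_add_div (div_pos ht hc) using 2 with n
    rw [integral_exp_neg_sub_one_add_mul_mul_exp_neg_div (by positivity) ht.le]
    field_simp

lemma malmstenKernel_sub_malmstenKernel_one {a u : ℝ} (ha : a ≠ 0) (hu : u ≠ 0) :
    malmstenKernel a u - malmstenKernel 1 u =
      exp (-(a * u)) * (1 - exp (-((1 - a) * u))) /
        (u * (1 - exp (-u)) * (1 - exp (-(a * u)))) := by
  have hsplit : exp (-u) = exp (-(a * u)) * exp (-((1 - a) * u)) := by
    rw [← exp_add]; ring_nf
  have one_sub_exp_ne_zero {x : ℝ} (hx : x ≠ 0) : 1 - exp (-x) ≠ 0 := by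
    rwa [sub_ne_zero, ne_comm, Ne, exp_eq_one_iff, neg_eq_zero]
  have h₁ := one_sub_exp_ne_zero hu
  have h₂ := one_sub_exp_ne_zero (mul_ne_zero ha hu)
  rw [malmstenKernel, malmstenKernel, one_mul]
  rw [hsplit] at h₁ ⊢
  generalize exp (-(a * u)) = x at h₁ h₂ ⊢
  generalize exp (-((1 - a) * u)) = y at h₁ ⊢
  field_simp
  ring

/-- Malmsten-type representation of the Mellin transform of `Z_α⁻¹`:
for `α ∈ (0,1)` and `s > 0`,
`Γ(1+s/α)/Γ(1+s) = exp(γ(1-1/α)s + ∫_{-∞}^0 (e^{sx}-1-sx)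
  e^{-α|x|}(1-e^{-(1-α)|x|})/(|x|(1-e^{-|x|})(1-e^{-α|x|})) dx)`. -/
theorem stable_mellin_malmsten (α : ℝ) (hα : α ∈ Ioo (0 : ℝ) 1) (s : ℝ) (hs : 0 < s) :
    Real.Gamma (1 + s / α) / Real.Gamma (1 + s) =
      Real.exp (Real.eulerMascheroniConstant * (1 - 1 / α) * s +
        ∫ x in Iio (0 : ℝ),
          (Real.exp (s * x) - 1 - s * x) *
            (Real.exp (-(α * |x|)) * (1 - Real.exp (-((1 - α) * |x|))) /
              (|x| * (1 - Real.exp (-|x|)) * (1 - Real.exp (-(α * |x|)))))) := by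
  obtain ⟨hα₀, -⟩ := hα
  obtain ⟨hintα, hvalα⟩ := integrableOn_and_integral_mul_malmstenKernel hα₀ hs
  obtain ⟨hint₁, hval₁⟩ := integrableOn_and_integral_mul_malmstenKernel one_pos hs
  rw [← integral_Iic_eq_integral_Iio, ← neg_zero, ← integral_comp_neg_Ioi,
    setIntegral_congr_fun measurableSet_Ioi fun u (hu : 0 < u) => by
      rw [abs_neg, abs_of_pos hu, ← malmstenKernel_sub_malmstenKernel_one hα₀.ne' hu.ne', mul_sub,
        mul_neg, sub_neg_eq_add],
    integral_sub hintα hint₁, hvalα, hval₁, div_one]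
  have hexponent : eulerMascheroniConstant * (1 - 1 / α) * s +
      (log (Gamma (1 + s / α)) + eulerMascheroniConstant * (s / α) -
        (log (Gamma (1 + s)) + eulerMascheroniConstant * s)) =
      log (Gamma (1 + s / α)) - log (Gamma (1 + s)) := by
    field_simp
    ring
  rw [hexponent, exp_sub, exp_log (Gamma_pos_of_pos (by positivity)),
    exp_log (Gamma_pos_of_pos (by positivity))]
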